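/- Let g(t) be the sum over all partitions λ in DS(t) of the number |MD(λ)| of main diagonal hooks of λ, and f(t) the number of partitions in DS(t). Then for t ≥ 3: g(t) = g(t−1) + g(t−3) + f(t−3), with initial values g(0) = g(1) = 0, g(2) = 1 (and g(−1) = 0). -/

import Mathlib

/-!
A self-conjugate partition is determined by its Frobenius coordinates `a = λᵢ - i - 1`
(`i` below the Durfee size), and every finite set of naturals occurs; the cell in the rows of the
coordinates `a` and `b` has hook length `a + b + 1`. Since in an `s`-core a row with `λᵢ - i = s + x` forces
a row with `λᵣ - r = x`, `λ ∈ DS(t)` exactly when its coordinates are `< t`, pairwise non-consecutive, and no two of them (equal or not)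
give a hook length `t` or `t + 1`. Folding `[0, t)` at its middle maps these sets bijectively and
size-preservingly onto the subsets of `[0, t - 1)` with gaps at least `3`; splitting those on
whether they contain `t - 2` gives the recurrence.
-/

/-- An integer partition, given by its (weakly decreasing, eventually zero)
sequence of parts, indexed from `0`. -/
structure IntPartition where
  parts : ℕ → ℕ
  antitone : ∀ i j, i ≤ j → parts j ≤ parts i
  finite : ∃ N, ∀ i, N ≤ i → parts i = 0

namespace IntPartition

/-- The size of a partition: the sum of its parts. -/
noncomputable def size (lam : IntPartition) : ℕ := ∑ᶠ i, lam.parts i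

/-- The parts of the conjugate partition: `conjParts lam j` is the number of
rows `i` with `lam.parts i > j` (rows and columns are `0`-indexed). -/
noncomputable def conjParts (lam : IntPartition) (j : ℕ) : ℕ :=
  Nat.card {i : ℕ | j < lam.parts i}

/-- A partition is self-conjugate if it equals its conjugate. -/
def IsSelfConjugate (lam : IntPartition) : Prop :=
  ∀ j, lam.conjParts j = lam.parts j

/-- `(i, j)` (both `0`-indexed) is a cell of the Young diagram of `lam`. -/
def IsCell (lam : IntPartition) (i j : ℕ) : Prop := j < lam.parts i

/-- The hook length of the cell `(i, j)` (both `0`-indexed): the number of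
cells directly to the right, plus the number directly below, plus one. -/
noncomputable def hook (lam : IntPartition) (i j : ℕ) : ℕ :=
  (lam.parts i - j) + (lam.conjParts j - i) - 1

/-- A partition is a `t`-core if no hook length is divisible by `t`. -/
def IsCore (lam : IntPartition) (t : ℕ) : Prop :=
  ∀ i j, lam.IsCell i j → ¬ (t ∣ lam.hook i j)

/-- The size of the Durfee square: the largest `k` such that the partition has
at least `k` parts of size at least `k`. -/
noncomputable def durfee (lam : IntPartition) : ℕ :=
  Nat.card {i : ℕ | i < lam.parts i}

/-- A partition has distinct parts if its (nonzero) parts are pairwise different. -/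
def DistinctParts (lam : IntPartition) : Prop :=
  ∀ i j, lam.parts i ≠ 0 → lam.parts j ≠ 0 → i ≠ j → lam.parts i ≠ lam.parts j

/-- The set of main diagonal hook lengths of `lam`. -/
noncomputable def MD (lam : IntPartition) : Set ℕ :=
  {h | ∃ i < lam.durfee, lam.hook i i = h}

/-- `lam ∈ DS(t)`: `lam` is a self-conjugate `(t, t+1)`-core partition whose
first `durfee lam` parts are pairwise distinct. -/
def InDS (lam : IntPartition) (t : ℕ) : Prop :=
  lam.IsSelfConjugate ∧ lam.IsCore t ∧ lam.IsCore (t + 1) ∧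
    ∀ i j, i < lam.durfee → j < lam.durfee → i ≠ j → lam.parts i ≠ lam.parts j

end IntPartition

/-- `fDS t` is the number of partitions in `DS(t)`. -/
noncomputable def fDS (t : ℕ) : ℕ := Nat.card {lam : IntPartition // lam.InDS t}

/-- `gDS t` is the total number of main diagonal hooks of the partitions in `DS(t)`. -/
noncomputable def gDS (t : ℕ) : ℕ := ∑ᶠ (lam : IntPartition) (_ : lam.InDS t), lam.durfee

open Finset

lemma IsLowerSet.lt_natCard_iff {s : Set ℕ} (hs : IsLowerSet s) (hfin : s.Finite) {i : ℕ} :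
    i < Nat.card s ↔ i ∈ s := by
  obtain rfl | ⟨a, rfl⟩ := hs.eq_univ_or_Iio
  · exact absurd hfin Set.infinite_univ
  · simp

namespace IntPartition

variable (lam : IntPartition)

lemma lt_natCard_setOf_lt_parts_iff {f : ℕ → ℕ} (hf : Monotone f) (i : ℕ) :
    i < Nat.card {i | f i < lam.parts i} ↔ f i < lam.parts i := by
  obtain ⟨N, hN⟩ := lam.finite
  refine IsLowerSet.lt_natCard_iff (fun a b hba ha => ?_) ((Set.finite_Iio N).subset fun a ha => ?_)
  · exact (hf hba).trans_lt (ha.trans_le (lam.antitone b a hba))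
  · by_contra hle
    have := hN a (not_lt.1 hle)
    simp_all

lemma lt_conjParts_iff (i j : ℕ) : i < lam.conjParts j ↔ j < lam.parts i :=
  lam.lt_natCard_setOf_lt_parts_iff monotone_const i

lemma lt_durfee_iff (i : ℕ) : i < lam.durfee ↔ i < lam.parts i :=
  lam.lt_natCard_setOf_lt_parts_iff monotone_id i

lemma parts_le_durfee {i : ℕ} (hi : lam.durfee ≤ i) : lam.parts i ≤ lam.durfee := by
  have := lam.lt_durfee_iff lam.durfee
  have := lam.antitone _ _ hi
  omega

variable {lam}

lemma ext_isCell {mu : IntPartition} (h : ∀ i j, lam.IsCell i j ↔ mu.IsCell i j) : lam = mu := by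
  obtain ⟨p, _, _⟩ := lam
  obtain ⟨q, _, _⟩ := mu
  congr
  exact funext fun i => eq_of_forall_lt_iff (h i)

namespace IsSelfConjugate

lemma isCell_comm (hsc : lam.IsSelfConjugate) {i j : ℕ} : lam.IsCell i j ↔ lam.IsCell j i := by
  rw [IsCell, IsCell, ← hsc j, lt_conjParts_iff]

lemma hook_add (hsc : lam.IsSelfConjugate) {i j : ℕ} (h : lam.IsCell i j) :
    lam.hook i j + i + j + 1 = lam.parts i + lam.parts j := by
  have := hsc.isCell_comm.1 h
  unfold hook IsCell at *
  rw [hsc j]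
  omega

lemma hook_comm (hsc : lam.IsSelfConjugate) (i j : ℕ) : lam.hook i j = lam.hook j i := by
  unfold hook
  rw [hsc i, hsc j]
  omega

end IsSelfConjugate

end IntPartition

lemma Finset.card_filter_le_eq_card_filter_lt_add (A : Finset ℕ) (a : ℕ) :
    #{x ∈ A | a ≤ x} = #{x ∈ A | a < x} + if a ∈ A then 1 else 0 := by
  have hsplit : {x ∈ A | a ≤ x} = {x ∈ A | a < x} ∪ {x ∈ A | x = a} := by
    rw [← filter_or]
    exact filter_congr fun x _ => by omega
  rw [hsplit, card_union_of_disjoint (disjoint_filter.2 fun x _ h h' => by omega), filter_eq']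
  split_ifs <;> simp

lemma Finset.eq_of_card_filter_le_eq {A B : Finset ℕ}
    (h : ∀ d, #{a ∈ A | d ≤ a} = #{a ∈ B | d ≤ a}) : A = B := by
  ext a
  have hA := A.card_filter_le_eq_card_filter_lt_add a
  have hB := B.card_filter_le_eq_card_filter_lt_add a
  have hsucc := h (a + 1)
  rw [h a] at hA
  split_ifs at hA hB <;> simp_all

/-- The cells of the self-conjugate partition with Frobenius coordinates `A`: the cell `(i, j)`
with `i ≤ j` is in the diagram iff at least `i + 1` coordinates are `≥ j - i`. -/
def FrobCell (A : Finset ℕ) (i j : ℕ) : Prop :=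
  min i j < #{a ∈ A | max i j - min i j ≤ a}

namespace FrobCell

variable {A : Finset ℕ}

lemma comm {i j : ℕ} : FrobCell A i j ↔ FrobCell A j i := by
  rw [FrobCell, FrobCell, min_comm, max_comm]

lemma of_succ_right {i j : ℕ} (h : FrobCell A i (j + 1)) : FrobCell A i j := by
  unfold FrobCell at *
  rcases le_or_gt i j with hij | hij
  · have : #{a ∈ A | j + 1 - i ≤ a} ≤ #{a ∈ A | j - i ≤ a} :=
      card_le_card (monotone_filter_right _ fun a _ (ha : _ ≤ a) => by omega)
    rw [min_eq_left (by omega), max_eq_right (by omega)] at h ⊢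
    omega
  · have hsucc := A.card_filter_le_eq_card_filter_lt_add (i - (j + 1))
    have hsame : {a ∈ A | i - (j + 1) < a} = {a ∈ A | i - j ≤ a} :=
      filter_congr fun _ _ => by omega
    rw [hsame] at hsucc
    rw [min_eq_right (by omega), max_eq_left (by omega)] at h ⊢
    split_ifs at hsucc <;> omega

lemma isLowerSet_row (A : Finset ℕ) (i : ℕ) : IsLowerSet {j | FrobCell A i j} :=
  isLowerSet_setOfPred.2 (antitone_nat_of_succ_le fun _ => of_succ_right)

lemma of_le_left {i i' j : ℕ} (h : FrobCell A i' j) (hi : i ≤ i') : FrobCell A i j :=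
  comm.2 (isLowerSet_row A j hi (comm.1 h))

lemma max_le_min_add {i j : ℕ} (h : FrobCell A i j) : max i j ≤ min i j + A.sup id := by
  obtain ⟨a, ha⟩ := card_pos.1 (h.trans_le' (Nat.zero_le _))
  rw [mem_filter] at ha
  have := le_sup (f := id) ha.1
  simp only [id] at this
  omega

lemma finite_row (A : Finset ℕ) (i : ℕ) : {j | FrobCell A i j}.Finite :=
  (Set.finite_Iic (i + A.sup id)).subset fun j h => by
    have := max_le_min_add h
    simp only [Set.mem_Iic]
    omega

lemma lt_natCard_row_iff {A : Finset ℕ} {i j : ℕ} :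
    j < Nat.card {j | FrobCell A i j} ↔ FrobCell A i j :=
  (isLowerSet_row A i).lt_natCard_iff (finite_row A i)

end FrobCell

namespace IntPartition

noncomputable def ofFrobenius (A : Finset ℕ) : IntPartition where
  parts i := Nat.card {j | FrobCell A i j}
  antitone i i' hi := le_of_forall_lt fun j hj =>
    FrobCell.lt_natCard_row_iff.2 ((FrobCell.lt_natCard_row_iff.1 hj).of_le_left hi)
  finite := ⟨A.sup id + 1, fun i hi => Nat.eq_zero_of_not_pos fun hpos => by
    have := (FrobCell.lt_natCard_row_iff.1 hpos).max_le_min_add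
    omega⟩

variable {A : Finset ℕ} {lam : IntPartition}

lemma isCell_ofFrobenius {i j : ℕ} : (ofFrobenius A).IsCell i j ↔ FrobCell A i j :=
  FrobCell.lt_natCard_row_iff

lemma isSelfConjugate_ofFrobenius (A : Finset ℕ) : (ofFrobenius A).IsSelfConjugate := by
  intro j
  show Nat.card {i | (ofFrobenius A).IsCell i j} = Nat.card {i | FrobCell A j i}
  simp only [isCell_ofFrobenius, FrobCell.comm (i := _) (j := j)]

/-- The Frobenius coordinates; the main diagonal hook lengths are the numbers `2a + 1`. -/
noncomputable def frobeniusSet (lam : IntPartition) : Finset ℕ :=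
  (range lam.durfee).image fun i => lam.parts i - i - 1

lemma mem_frobeniusSet {a : ℕ} : a ∈ lam.frobeniusSet ↔ ∃ i, lam.parts i = i + a + 1 := by
  simp only [frobeniusSet, mem_image, mem_range, lt_durfee_iff]
  constructor
  · rintro ⟨i, hi, rfl⟩
    exact ⟨i, by omega⟩
  · rintro ⟨i, hi⟩
    exact ⟨i, by omega, by omega⟩

lemma injOn_parts_sub_self_sub_one :
    Set.InjOn (fun i => lam.parts i - i - 1) {i | i < lam.parts i} := by
  intro i hi j hj hij
  have := lam.antitone i j
  have := lam.antitone j i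
  simp only [Set.mem_ofPred_eq] at hi hj hij
  omega

lemma card_filter_frobeniusSet (d : ℕ) :
    #{a ∈ lam.frobeniusSet | d ≤ a} = Nat.card {i | i + d < lam.parts i} := by
  rw [frobeniusSet, filter_image, card_image_of_injOn, ← Nat.card_eq_finsetCard]
  · congr; ext i
    simp only [mem_filter, mem_range, lt_durfee_iff, Set.mem_ofPred_eq]
    omega
  · exact injOn_parts_sub_self_sub_one.mono fun i hi => by
      simp only [coe_filter, mem_range, lt_durfee_iff, Set.mem_ofPred_eq] at hi ⊢
      exact hi.1

lemma card_frobeniusSet (lam : IntPartition) : #lam.frobeniusSet = lam.durfee := by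
  have := lam.card_filter_frobeniusSet 0
  simp only [zero_le, filter_true, add_zero] at this
  exact this

lemma IsSelfConjugate.isCell_iff (hsc : lam.IsSelfConjugate) {i j : ℕ} :
    lam.IsCell i j ↔ FrobCell lam.frobeniusSet i j := by
  wlog hij : i ≤ j generalizing i j
  · rw [hsc.isCell_comm, FrobCell.comm]
    exact this (by omega)
  rw [FrobCell, min_eq_left hij, max_eq_right hij, card_filter_frobeniusSet,
    lam.lt_natCard_setOf_lt_parts_iff fun _ _ h => Nat.add_le_add_right h _, IsCell]
  omega

lemma ofFrobenius_frobeniusSet (hsc : lam.IsSelfConjugate) :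
    ofFrobenius lam.frobeniusSet = lam :=
  ext_isCell fun _ _ => isCell_ofFrobenius.trans hsc.isCell_iff.symm

lemma frobeniusSet_ofFrobenius (A : Finset ℕ) : (ofFrobenius A).frobeniusSet = A := by
  set B := (ofFrobenius A).frobeniusSet
  have hcell (i j : ℕ) : FrobCell B i j ↔ FrobCell A i j :=
    (isSelfConjugate_ofFrobenius A).isCell_iff.symm.trans isCell_ofFrobenius
  refine Finset.eq_of_card_filter_le_eq fun d => eq_of_forall_lt_iff fun i => ?_
  have := hcell i (i + d)
  simp only [FrobCell, min_eq_left (Nat.le_add_right i d), max_eq_right (Nat.le_add_right i d),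
    Nat.add_sub_cancel_left] at this
  exact this

end IntPartition

/-- The Frobenius coordinates of the partitions in `DS(t)`; `a + b + 1` is the hook length of the
cell in the rows of the coordinates `a` and `b`. -/
def IsDSFrobenius (t : ℕ) (A : Finset ℕ) : Prop :=
  (∀ a ∈ A, a < t) ∧ (∀ a ∈ A, ∀ b ∈ A, a + b + 1 ≠ t ∧ a + b + 1 ≠ t + 1) ∧
    ∀ a ∈ A, a + 1 ∉ A

namespace IntPartition

variable {lam : IntPartition}

/-- If no row has `λᵣ - r = x`, the column `x + r₀ - 1`, where `r₀` counts the rows with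
`λᵣ - r > x`, has exactly `r₀` cells and meets row `i` in a hook of length `s`. -/
lemma IsCore.exists_parts_eq {s : ℕ} (hcore : lam.IsCore s) {i x : ℕ}
    (hpi : lam.parts i = i + s + x) : ∃ r, lam.parts r = r + x := by
  by_contra! hno
  have hs : s ≠ 0 := by
    rintro rfl
    exact hno i (by omega)
  obtain ⟨r₀, hr₀⟩ : ∃ r₀, ∀ r, r < r₀ ↔ r + x < lam.parts r :=
    ⟨_, lam.lt_natCard_setOf_lt_parts_iff fun _ _ h => by omega⟩
  have hcol : lam.conjParts (x + r₀ - 1) = r₀ := eq_of_forall_lt_iff fun r => by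
    rw [lt_conjParts_iff]
    have := hr₀ r₀
    have := hr₀ (r₀ - 1)
    have := hno r₀
    have := lam.antitone r₀ r
    have := lam.antitone r (r₀ - 1)
    omega
  have hir₀ := (hr₀ i).2 (by omega)
  have hr₀le : r₀ ≤ i + s := by
    by_contra! h
    have := (hr₀ (i + s)).1 h
    have := lam.antitone i (i + s) (by omega)
    omega
  have hhook : lam.hook i (x + r₀ - 1) = s := by
    rw [hook, hcol]
    omega
  exact hcore i (x + r₀ - 1) (by unfold IsCell; omega) (hhook ▸ dvd_refl s)

lemma IsSelfConjugate.isCell_and_hook_eq (hsc : lam.IsSelfConjugate) {i j a b : ℕ}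
    (hi : lam.parts i = i + a + 1) (hj : lam.parts j = j + b + 1) :
    lam.IsCell i j ∧ lam.hook i j = a + b + 1 := by
  have hcell : lam.IsCell i j := by
    have := lam.antitone i j
    unfold IsCell
    omega
  have := hsc.hook_add hcell
  exact ⟨hcell, by omega⟩

lemma IsCore.not_dvd_add_add_one {s : ℕ} (hcore : lam.IsCore s) (hsc : lam.IsSelfConjugate)
    {a b : ℕ} (ha : a ∈ lam.frobeniusSet) (hb : b ∈ lam.frobeniusSet) : ¬ s ∣ a + b + 1 := by
  obtain ⟨i, hi⟩ := mem_frobeniusSet.1 ha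
  obtain ⟨j, hj⟩ := mem_frobeniusSet.1 hb
  obtain ⟨hcell, hhook⟩ := hsc.isCell_and_hook_eq hi hj
  exact hhook ▸ hcore i j hcell

lemma forall_succ_notMem_frobeniusSet_iff :
    (∀ a ∈ lam.frobeniusSet, a + 1 ∉ lam.frobeniusSet) ↔
      ∀ i j, i < lam.durfee → j < lam.durfee → i ≠ j → lam.parts i ≠ lam.parts j := by
  simp only [lt_durfee_iff]
  constructor
  · intro h i j hi hj hij heq
    wlog hlt : i < j generalizing i j
    · exact this j i hj hi hij.symm heq.symm (by omega)
    have := lam.antitone i (i + 1)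
    have := lam.antitone (i + 1) j
    exact h (lam.parts (i + 1) - (i + 1) - 1) (mem_frobeniusSet.2 ⟨i + 1, by omega⟩)
      (mem_frobeniusSet.2 ⟨i, by omega⟩)
  · intro h a ha ha'
    obtain ⟨j, hj⟩ := mem_frobeniusSet.1 ha
    obtain ⟨i, hi⟩ := mem_frobeniusSet.1 ha'
    have := lam.antitone i j
    have := lam.antitone j i
    exact h i j (by omega) (by omega) (by omega) (by omega)

lemma IsSelfConjugate.lt_of_mem_frobeniusSet (hsc : lam.IsSelfConjugate) {t : ℕ}
    (hct : lam.IsCore t) (hct' : lam.IsCore (t + 1))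
    (hsucc : ∀ a ∈ lam.frobeniusSet, a + 1 ∉ lam.frobeniusSet) {a : ℕ}
    (ha : a ∈ lam.frobeniusSet) : a < t := by
  by_contra! hta
  obtain ⟨i, hi⟩ := mem_frobeniusSet.1 ha
  obtain ⟨r, hr⟩ := hct.exists_parts_eq (i := i) (x := a + 1 - t) (by omega)
  -- for `a = t` the coordinate `0` completes a hook of length `t + 1`; for `a > t` the
  -- coordinates `a - t - 1` and `a - t` are consecutive
  obtain rfl | hlt := hta.eq_or_lt
  · exact hct'.not_dvd_add_add_one hsc ha (b := 0) (mem_frobeniusSet.2 ⟨r, by omega⟩)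
      (by simp)
  · obtain ⟨r', hr'⟩ := hct'.exists_parts_eq (i := i) (x := a - t) (by omega)
    exact hsucc (a - t - 1) (mem_frobeniusSet.2 ⟨r', by omega⟩)
      (mem_frobeniusSet.2 ⟨r, by omega⟩)

lemma IsSelfConjugate.isCore_of_isDSFrobenius (hsc : lam.IsSelfConjugate) {t s : ℕ}
    (hA : IsDSFrobenius t lam.frobeniusSet) (hts : t ≤ s) (hst : s ≤ t + 1) : lam.IsCore s := by
  intro i j hcell hdvd
  wlog hij : i ≤ j generalizing i j
  · exact this j i (hsc.isCell_comm.1 hcell) (hsc.hook_comm i j ▸ hdvd) (by omega)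
  have hhook := hsc.hook_add hcell
  have hcell' := hsc.isCell_comm.1 hcell
  unfold IsCell at hcell hcell'
  have hi : lam.parts i - i - 1 ∈ lam.frobeniusSet := mem_frobeniusSet.2 ⟨i, by omega⟩
  have := hA.1 _ hi
  by_cases hj : j < lam.parts j
  -- both rows meet the diagonal: the hook `a + b + 1 < 2s` would have to be `s`
  · have hj' : lam.parts j - j - 1 ∈ lam.frobeniusSet := mem_frobeniusSet.2 ⟨j, by omega⟩
    have := hA.1 _ hj'
    have := hA.2.1 _ hi _ hj'
    have : lam.hook i j = s := Nat.eq_of_dvd_of_lt_two_mul (by omega) hdvd (by omega)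
    omega
  -- otherwise `λⱼ ≤ durfee ≤ j`, so the hook is at most `λᵢ - i - 1 < t`
  · have := lam.parts_le_durfee (not_lt.1 ((lam.lt_durfee_iff j).not.2 hj))
    have := Nat.le_of_dvd (by omega) hdvd
    omega

theorem IsSelfConjugate.inDS_iff (hsc : lam.IsSelfConjugate) {t : ℕ} :
    lam.InDS t ↔ IsDSFrobenius t lam.frobeniusSet := by
  constructor
  · rintro ⟨-, hct, hct', hdist⟩
    have hsucc := forall_succ_notMem_frobeniusSet_iff.2 hdist
    refine ⟨fun a ha => hsc.lt_of_mem_frobeniusSet hct hct' hsucc ha,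
      fun a ha b hb => ⟨fun h => ?_, fun h => ?_⟩, hsucc⟩
    · exact hct.not_dvd_add_add_one hsc ha hb (h ▸ dvd_refl _)
    · exact hct'.not_dvd_add_add_one hsc ha hb (h ▸ dvd_refl _)
  · intro hA
    exact ⟨hsc, hsc.isCore_of_isDSFrobenius hA le_rfl (by omega),
      hsc.isCore_of_isDSFrobenius hA (by omega) le_rfl,
      forall_succ_notMem_frobeniusSet_iff.1 hA.2.2⟩

end IntPartition

/-- Folding `[0, t)` at its middle: a coordinate `a` with `2a + 1 < t` goes to the even number
`2a`, a larger one to the odd number `2(t - a) - 1`. The forbidden hook lengths `t, t + 1` and the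
forbidden gap `1` between coordinates become exactly the gaps `< 3` between the images. -/
def foldDiag (t a : ℕ) : ℕ := if 2 * a + 2 ≤ t then 2 * a else 2 * (t - a) - 1

def unfoldDiag (t p : ℕ) : ℕ := if p % 2 = 0 then p / 2 else t - (p + 1) / 2

section Fold

variable {t a b p q : ℕ}

lemma unfoldDiag_foldDiag (ha : a < t) : unfoldDiag t (foldDiag t a) = a := by
  unfold foldDiag unfoldDiag
  split_ifs <;> omega

lemma foldDiag_lt (ha : a < t) (h : a + a + 1 ≠ t) (h' : a + a + 1 ≠ t + 1) :
    foldDiag t a < t - 1 := by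
  unfold foldDiag
  split_ifs <;> omega

lemma foldDiag_add_three_le (ha : a < t) (hb : b < t) (hab : a + b + 1 ≠ t)
    (hab' : a + b + 1 ≠ t + 1) (ha' : a + 1 ≠ b) (hb' : b + 1 ≠ a)
    (hlt : foldDiag t a < foldDiag t b) : foldDiag t a + 3 ≤ foldDiag t b := by
  unfold foldDiag at *
  split_ifs at * <;> omega

lemma foldDiag_unfoldDiag (hp : p < t - 1) : foldDiag t (unfoldDiag t p) = p := by
  unfold foldDiag unfoldDiag
  split_ifs <;> omega

lemma unfoldDiag_lt (hp : p < t - 1) : unfoldDiag t p < t := by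
  unfold unfoldDiag
  split_ifs <;> omega

lemma unfoldDiag_add_unfoldDiag (hp : p < t - 1) (hq : q < t - 1)
    (hpq : p = q ∨ p + 3 ≤ q ∨ q + 3 ≤ p) :
    unfoldDiag t p + unfoldDiag t q + 1 ≠ t ∧ unfoldDiag t p + unfoldDiag t q + 1 ≠ t + 1 ∧
      unfoldDiag t p + 1 ≠ unfoldDiag t q := by
  unfold unfoldDiag
  split_ifs <;> omega

end Fold

def gapSets (n : ℕ) : Finset (Finset ℕ) :=
  (range n).powerset.filter fun S => ∀ x ∈ S, ∀ y ∈ S, x < y → x + 3 ≤ y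

lemma mem_gapSets {n : ℕ} {S : Finset ℕ} :
    S ∈ gapSets n ↔ (∀ x ∈ S, x < n) ∧ ∀ x ∈ S, ∀ y ∈ S, x < y → x + 3 ≤ y := by
  simp [gapSets, subset_iff]

lemma gapSets_zero : gapSets 0 = {∅} := by decide

lemma gapSets_one : gapSets 1 = {∅, {0}} := by decide

namespace IsDSFrobenius

variable {t : ℕ} {A : Finset ℕ}

lemma image_unfoldDiag_image_foldDiag (hA : IsDSFrobenius t A) :
    (A.image (foldDiag t)).image (unfoldDiag t) = A := by
  rw [image_image]
  exact (image_congr fun a ha => unfoldDiag_foldDiag (hA.1 a ha)).trans image_id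

lemma card_image_foldDiag (hA : IsDSFrobenius t A) : #(A.image (foldDiag t)) = #A :=
  card_image_of_injOn fun a ha b hb h => by
    rw [← unfoldDiag_foldDiag (hA.1 a ha), ← unfoldDiag_foldDiag (hA.1 b hb)]
    exact congrArg _ h

lemma image_foldDiag_mem_gapSets (hA : IsDSFrobenius t A) :
    A.image (foldDiag t) ∈ gapSets (t - 1) := by
  obtain ⟨hlt, hhook, hsucc⟩ := hA
  simp only [mem_gapSets, forall_mem_image]
  refine ⟨fun a ha => foldDiag_lt (hlt a ha) (hhook a ha a ha).1 (hhook a ha a ha).2,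
    fun a ha b hb h => foldDiag_add_three_le (hlt a ha) (hlt b hb) (hhook a ha b hb).1
      (hhook a ha b hb).2 ?_ ?_ h⟩
  · exact fun hab => hsucc a ha (hab ▸ hb)
  · exact fun hba => hsucc b hb (hba ▸ ha)

end IsDSFrobenius

section gapSets

variable {t : ℕ} {S : Finset ℕ}

lemma image_foldDiag_image_unfoldDiag (hS : S ∈ gapSets (t - 1)) :
    (S.image (unfoldDiag t)).image (foldDiag t) = S := by
  rw [image_image]
  exact (image_congr fun p hp => foldDiag_unfoldDiag ((mem_gapSets.1 hS).1 p hp)).trans image_id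

lemma isDSFrobenius_image_unfoldDiag (hS : S ∈ gapSets (t - 1)) :
    IsDSFrobenius t (S.image (unfoldDiag t)) := by
  obtain ⟨hlt, hgap⟩ := mem_gapSets.1 hS
  have hpair (p) (hp : p ∈ S) (q) (hq : q ∈ S) := unfoldDiag_add_unfoldDiag (hlt p hp) (hlt q hq)
    (by rcases lt_trichotomy p q with h | rfl | h
        · exact Or.inr (Or.inl (hgap p hp q hq h))
        · exact Or.inl rfl
        · exact Or.inr (Or.inr (hgap q hq p hp h)))
  simp only [IsDSFrobenius, forall_mem_image]
  refine ⟨fun p hp => unfoldDiag_lt (hlt p hp),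
    fun p hp q hq => ⟨(hpair p hp q hq).1, (hpair p hp q hq).2.1⟩, fun p hp hmem => ?_⟩
  obtain ⟨q, hq, he⟩ := mem_image.1 hmem
  exact (hpair p hp q hq).2.2 he.symm

end gapSets

lemma filter_notMem_gapSets_succ (n : ℕ) : (gapSets (n + 1)).filter (n ∉ ·) = gapSets n := by
  ext S
  simp only [mem_filter, mem_gapSets]
  constructor
  · rintro ⟨⟨hlt, hgap⟩, hn⟩
    refine ⟨fun x hx => ?_, hgap⟩
    have := hlt x hx
    have : x ≠ n := ne_of_mem_of_not_mem hx hn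
    omega
  · rintro ⟨hlt, hgap⟩
    exact ⟨⟨fun x hx => (hlt x hx).trans n.lt_succ_self, hgap⟩, fun hn => (hlt n hn).false⟩

lemma sum_card_filter_mem_gapSets_succ (n : ℕ) :
    ∑ S ∈ (gapSets (n + 1)).filter (n ∈ ·), #S = ∑ S ∈ gapSets (n - 2), (#S + 1) := by
  refine sum_nbij' (·.erase n) (insert n) (fun S hS => ?_) (fun S hS => ?_)
    (fun S hS => insert_erase (mem_filter.1 hS).2) (fun S hS => erase_insert fun hn => ?_)
    (fun S hS => (card_erase_add_one (mem_filter.1 hS).2).symm)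
  · obtain ⟨⟨hlt, hgap⟩, hn⟩ := (mem_filter.1 hS).imp_left mem_gapSets.1
    refine mem_gapSets.2 ⟨fun x hx => ?_, fun x hx y hy => hgap x (mem_of_mem_erase hx) y
      (mem_of_mem_erase hy)⟩
    have := hlt x (mem_of_mem_erase hx)
    have := hgap x (mem_of_mem_erase hx) n hn
    have := ne_of_mem_erase hx
    omega
  · obtain ⟨hlt, hgap⟩ := mem_gapSets.1 hS
    refine mem_filter.2 ⟨mem_gapSets.2 ⟨fun x hx => ?_, fun x hx y hy hxy => ?_⟩,
      mem_insert_self n S⟩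
    · rcases mem_insert.1 hx with rfl | hxS
      · exact x.lt_succ_self
      · have := hlt x hxS
        omega
    · rcases mem_insert.1 hx with rfl | hxS <;> rcases mem_insert.1 hy with rfl | hyS
      · omega
      · have := hlt y hyS
        omega
      · have := hlt x hxS
        omega
      · exact hgap x hxS y hyS hxy
  · have := (mem_gapSets.1 hS).1 n hn
    omega

lemma sum_card_gapSets_succ (n : ℕ) :
    ∑ S ∈ gapSets (n + 1), #S =
      ∑ S ∈ gapSets n, #S + ∑ S ∈ gapSets (n - 2), #S + #(gapSets (n - 2)) := by
  rw [← sum_filter_not_add_sum_filter _ (n ∈ ·), filter_notMem_gapSets_succ,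
    sum_card_filter_mem_gapSets_succ, sum_add_distrib, card_eq_sum_ones, add_assoc]

namespace IntPartition

noncomputable def frobeniusEquiv (t : ℕ) :
    {lam : IntPartition // lam.InDS t} ≃ {A : Finset ℕ // IsDSFrobenius t A} where
  toFun lam := ⟨lam.1.frobeniusSet, (IsSelfConjugate.inDS_iff lam.2.1).1 lam.2⟩
  invFun A := ⟨ofFrobenius A, (IsSelfConjugate.inDS_iff (isSelfConjugate_ofFrobenius A)).2
    ((frobeniusSet_ofFrobenius A).symm ▸ A.2)⟩
  left_inv lam := Subtype.ext (ofFrobenius_frobeniusSet lam.2.1)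
  right_inv A := Subtype.ext (frobeniusSet_ofFrobenius A)

end IntPartition

def foldEquiv (t : ℕ) : {A : Finset ℕ // IsDSFrobenius t A} ≃ {S // S ∈ gapSets (t - 1)} where
  toFun A := ⟨A.1.image (foldDiag t), A.2.image_foldDiag_mem_gapSets⟩
  invFun S := ⟨S.1.image (unfoldDiag t), isDSFrobenius_image_unfoldDiag S.2⟩
  left_inv A := Subtype.ext A.2.image_unfoldDiag_image_foldDiag
  right_inv S := Subtype.ext (image_foldDiag_image_unfoldDiag S.2)

noncomputable def dsEquiv (t : ℕ) :
    {lam : IntPartition // lam.InDS t} ≃ {S // S ∈ gapSets (t - 1)} :=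
  (IntPartition.frobeniusEquiv t).trans (foldEquiv t)

lemma card_dsEquiv {t : ℕ} (lam : {lam : IntPartition // lam.InDS t}) :
    #(dsEquiv t lam).1 = lam.1.durfee :=
  ((IntPartition.frobeniusEquiv t lam).2.card_image_foldDiag).trans lam.1.card_frobeniusSet

lemma fDS_eq_card_gapSets (t : ℕ) : fDS t = #(gapSets (t - 1)) := by
  rw [fDS, Nat.card_congr (dsEquiv t), Nat.card_eq_finsetCard]

lemma gDS_eq_sum_card_gapSets (t : ℕ) : gDS t = ∑ S ∈ gapSets (t - 1), #S := by
  rw [gDS, ← finsum_subtype_eq_finsum_cond]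
  simp_rw [← card_dsEquiv]
  rw [finsum_comp_equiv (dsEquiv t) (f := fun S => #S.1), finsum_eq_sum_of_fintype, sum_coe_sort]

/-- `g(0) = g(1) = 0`, `g(2) = 1`, and `g(t) = g(t-1) + g(t-3) + f(t-3)` for `t ≥ 3`. -/
theorem gDS_recurrence :
    gDS 0 = 0 ∧ gDS 1 = 0 ∧ gDS 2 = 1 ∧
      ∀ t : ℕ, 3 ≤ t → gDS t = gDS (t - 1) + gDS (t - 3) + fDS (t - 3) := by
  simp only [gDS_eq_sum_card_gapSets, fDS_eq_card_gapSets]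
  refine ⟨by simp [gapSets_zero], by simp [gapSets_zero], by simp [gapSets_one], fun t ht => ?_⟩
  obtain ⟨n, rfl⟩ : ∃ n, t = n + 3 := ⟨t - 3, by omega⟩
  rw [show n + 3 - 1 - 1 = n + 1 by omega, show n + 3 - 1 = n + 1 + 1 by omega,
    show n + 3 - 3 - 1 = n + 1 - 2 by omega]
  exact sum_card_gapSets_succ (n + 1)
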